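/- arXiv:2002.08475 — 4 statements merged into one kernel-verified Lean document; each statement's English description precedes it below -/
import Mathlib

section
/- Let U be a finite set partitioned into disjoint subsets U₁ and U₂, let R be a commutative ring, and for each i ∈ U let f_i be a function from subsets of U to R. For p = 1, 2 and for T_p ⊆ U_p, S ⊆ U, define F_p(T_p, S) := ∏_{i ∈ T_p} f_i(S) if S ∩ U_p ⊆ T_p, and F_p(T_p, S) := 0 otherwise. Then for every T ⊆ U, the multi-subset transform satisfies g(T) = ∑_{S ⊆ U} F₁(T ∩ U₁, S) · F₂(T ∩ U₂, S). -/
/-- Reduction of the multi-subset transform to a rectangular matrix product: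
if the finite ground set `U` (here the whole type `α`) is partitioned into
`U₁` and `U₂`, and `F_p(T_p, S) = [S ∩ U_p ⊆ T_p] · ∏_{i ∈ T_p} f_i(S)`, then
`g(T) = ∑_{S ⊆ T} ∏_{i ∈ T} f_i(S) = ∑_{S ⊆ U} F₁(T ∩ U₁, S) · F₂(T ∩ U₂, S)`. -/
theorem multiSubsetTransform_eq_matrix_product
    {α : Type*} [Fintype α] [DecidableEq α] {R : Type*} [CommRing R]
    (U₁ U₂ : Finset α) (hdisj : Disjoint U₁ U₂) (hcover : U₁ ∪ U₂ = Finset.univ)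
    (f : α → Finset α → R) (T : Finset α) :
    (∑ S ∈ T.powerset, ∏ i ∈ T, f i S) =
      ∑ S ∈ (Finset.univ : Finset α).powerset,
        (if S ∩ U₁ ⊆ T ∩ U₁ then ∏ i ∈ T ∩ U₁, f i S else 0) *
        (if S ∩ U₂ ⊆ T ∩ U₂ then ∏ i ∈ T ∩ U₂, f i S else 0) := by
  rw [show T.powerset = (Finset.univ : Finset α).powerset.filter (· ⊆ T) by
    ext S; simp [Finset.mem_powerset], Finset.sum_filter]
  refine Finset.sum_congr rfl fun S _ => ?_
  have hST : (S ∩ U₁ ⊆ T ∩ U₁ ∧ S ∩ U₂ ⊆ T ∩ U₂) ↔ S ⊆ T := by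
    constructor
    · rintro ⟨h1, h2⟩ x hx
      have : x ∈ U₁ ∪ U₂ := hcover ▸ Finset.mem_univ x
      rcases Finset.mem_union.1 this with h | h
      · exact (Finset.mem_inter.1 (h1 (Finset.mem_inter.2 ⟨hx, h⟩))).1
      · exact (Finset.mem_inter.1 (h2 (Finset.mem_inter.2 ⟨hx, h⟩))).1
    · intro h
      exact ⟨Finset.inter_subset_inter h (subset_refl _),
             Finset.inter_subset_inter h (subset_refl _)⟩
  by_cases h : S ⊆ T
  · rw [if_pos ((hST.2 h).1), if_pos ((hST.2 h).2), if_pos h]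
    rw [← Finset.prod_union (hdisj.mono Finset.inter_subset_right Finset.inter_subset_right),
        ← Finset.inter_union_distrib_left, hcover, Finset.inter_univ]
  · rw [if_neg h]
    by_cases h1 : S ∩ U₁ ⊆ T ∩ U₁
    · rw [if_neg fun h2 => h (hST.1 ⟨h1, h2⟩), mul_zero]
    · rw [if_neg h1, zero_mul]
end

section
/- (Erdős–Spencer covering design bound.) Let s ≤ k ≤ v be positive integers and let V be a set with v elements. Then there exists a family 𝒦 of k-element subsets of V such that every s-element subset of V is contained in at least one member of 𝒦, and |𝒦| · C(k,s) ≤ (1 + ln C(k,s)) · C(v,s). Equivalently, the minimum size c(v,k,s) of such a covering family satisfies c(v,k,s)·C(k,s)/C(v,s) ≤ 1 + ln C(k,s). -/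
open Finset

section
variable {α : Type*} [DecidableEq α]

lemma card_supersets (V S : Finset α) (k : ℕ)
    (hS : S ⊆ V) (hsk : S.card ≤ k) :
    ((V.powersetCard k).filter (fun K => S ⊆ K)).card
      = (V.card - S.card).choose (k - S.card) := by
  have hc := Finset.card_powersetCard (k - S.card) (V \ S)
  rw [Finset.card_sdiff_of_subset hS] at hc
  rw [← hc]
  apply Finset.card_bij' (fun K _ => K \ S) (fun T _ => T ∪ S)
  · intro K hK
    rw [Finset.mem_filter, Finset.mem_powersetCard] at hK
    obtain ⟨⟨hKV, hKc⟩, hSK⟩ := hK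
    rw [Finset.mem_powersetCard]
    exact ⟨Finset.sdiff_subset_sdiff hKV (le_refl S),
      by rw [Finset.card_sdiff_of_subset hSK, hKc]⟩
  · intro T hT
    rw [Finset.mem_powersetCard] at hT
    obtain ⟨hTV, hTc⟩ := hT
    have hdisj : Disjoint T S := (Finset.subset_sdiff.mp hTV).2
    rw [Finset.mem_filter, Finset.mem_powersetCard]
    refine ⟨⟨Finset.union_subset (Finset.subset_sdiff.mp hTV).1 hS, ?_⟩,
      Finset.subset_union_right⟩
    rw [Finset.card_union_of_disjoint hdisj, hTc]
    omega
  · intro K hK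
    rw [Finset.mem_filter] at hK
    exact Finset.sdiff_union_of_subset hK.2
  · intro T hT
    rw [Finset.mem_powersetCard] at hT
    have hdisj : Disjoint T S := (Finset.subset_sdiff.mp hT.1).2
    rw [Finset.union_sdiff_right, Finset.sdiff_eq_self_of_disjoint hdisj]

lemma sum_gains (V : Finset α) (k s : ℕ)
    (U : Finset (Finset α)) (hU : ∀ S ∈ U, S ⊆ V ∧ S.card = s) (hsk : s ≤ k) :
    ∑ K ∈ V.powersetCard k, (U.filter (fun S => S ⊆ K)).card
      = U.card * (V.card - s).choose (k - s) := by
  have : ∀ K ∈ V.powersetCard k, (U.filter (fun S => S ⊆ K)).card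
      = ∑ S ∈ U, if S ⊆ K then 1 else 0 := by
    intro K _
    rw [Finset.card_filter]
  rw [Finset.sum_congr rfl this, Finset.sum_comm]
  have inner : ∀ S ∈ U, (∑ K ∈ V.powersetCard k, if S ⊆ K then (1:ℕ) else 0)
      = (V.card - s).choose (k - s) := by
    intro S hS
    rw [← Finset.card_filter]
    have h := card_supersets V S k (hU S hS).1 (by rw [(hU S hS).2]; exact hsk)
    rwa [(hU S hS).2] at h
  rw [Finset.sum_congr rfl inner, Finset.sum_const, smul_eq_mul]

lemma exists_good_K (V : Finset α) (k s : ℕ) (hsk : s ≤ k) (hkV : k ≤ V.card)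
    (U : Finset (Finset α)) (hU : ∀ S ∈ U, S ⊆ V ∧ S.card = s) (hne : U.Nonempty) :
    ∃ K ∈ V.powersetCard k,
      U.card * k.choose s ≤ (U.filter (fun S => S ⊆ K)).card * V.card.choose s := by
  classical
  set P := V.powersetCard k with hP
  set D := (V.card - s).choose (k - s) with hD
  have hPcard : P.card = V.card.choose k := Finset.card_powersetCard k V
  have hPne : P.Nonempty := by
    rw [← Finset.card_pos, hPcard]; exact Nat.choose_pos hkV
  have hsum := sum_gains V k s U hU hsk
  have hex : ∃ K ∈ P, U.card * D ≤ P.card * (U.filter (fun S => S ⊆ K)).card := by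
    by_contra hcon
    push_neg at hcon
    have hlt : ∑ K ∈ P, P.card * (U.filter (fun S => S ⊆ K)).card
        < ∑ _K ∈ P, U.card * D :=
      Finset.sum_lt_sum_of_nonempty hPne (fun K hK => hcon K hK)
    have l1 : ∑ _K ∈ P, U.card * D = P.card * (U.card * D) := by
      rw [Finset.sum_const, smul_eq_mul]
    have l2 : ∑ K ∈ P, P.card * (U.filter (fun S => S ⊆ K)).card
        = P.card * (U.card * D) := by
      rw [← Finset.mul_sum, hsum]
    rw [l1, l2] at hlt
    exact lt_irrefl _ hlt
  obtain ⟨K, hKP, hK⟩ := hex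
  refine ⟨K, hKP, ?_⟩
  have hD0 : 0 < D := Nat.choose_pos (Nat.sub_le_sub_right hkV s)
  have hid : V.card.choose k * k.choose s = V.card.choose s * D :=
    Nat.choose_mul hsk
  apply Nat.le_of_mul_le_mul_right _ hD0
  calc U.card * k.choose s * D = U.card * D * k.choose s := by ring
    _ ≤ P.card * (U.filter (fun S => S ⊆ K)).card * k.choose s :=
        Nat.mul_le_mul_right _ hK
    _ = (U.filter (fun S => S ⊆ K)).card * (V.card.choose k * k.choose s) := by
        rw [hPcard]; ring
    _ = (U.filter (fun S => S ⊆ K)).card * V.card.choose s * D := by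
        rw [hid]; ring

lemma greedy_cover (V : Finset α) (k s : ℕ)
    (hsk : s ≤ k) (hkV : k ≤ V.card) :
    ∀ n (U : Finset (Finset α)), U.card = n → (∀ S ∈ U, S ⊆ V ∧ S.card = s) →
    ∃ 𝒦 : Finset (Finset α), (∀ K ∈ 𝒦, K ⊆ V ∧ K.card = k) ∧
      (∀ S ∈ U, ∃ K ∈ 𝒦, S ⊆ K) ∧
      (𝒦.card : ℝ) ≤ ∑ j ∈ Finset.range n,
        min 1 ((V.card.choose s : ℝ) / (k.choose s : ℝ) / (j + 1)) := by
  intro n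
  induction n using Nat.strong_induction_on with
  | _ n ih =>
    intro U hUcard hU
    rcases Nat.eq_zero_or_pos n with hn | hn
    · subst hn
      refine ⟨∅, by simp, ?_, by simp⟩
      intro S hS
      rw [Finset.card_eq_zero.mp hUcard] at hS
      simp at hS
    · have hne : U.Nonempty := by rw [← Finset.card_pos, hUcard]; exact hn
      obtain ⟨K, hKP, hKgood⟩ := exists_good_K V k s hsk hkV U hU hne
      rw [hUcard] at hKgood
      set g := (U.filter (fun S => S ⊆ K)).card with hg
      have hb0 : 0 < k.choose s := Nat.choose_pos hsk
      have hM0 : 0 < V.card.choose s := Nat.choose_pos (hsk.trans hkV)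
      have hg1 : 1 ≤ g := by
        rcases Nat.eq_zero_or_pos g with h0 | h
        · rw [h0, Nat.zero_mul] at hKgood
          have := Nat.mul_pos hn hb0
          omega
        · exact h
      have hgn : g ≤ n := by rw [hg, ← hUcard]; exact Finset.card_filter_le _ _
      set U' := U.filter (fun S => ¬ S ⊆ K) with hU'
      have hsplit : g + U'.card = n := by
        rw [hg, hU', ← hUcard]
        exact Finset.card_filter_add_card_filter_not _
      have hU'card : U'.card = n - g := by omega
      obtain ⟨𝒦', h1, h2, h3⟩ := ih (n - g) (by omega) U' hU'card
        (fun S hS => hU S (Finset.mem_filter.mp hS).1)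
      refine ⟨insert K 𝒦', ?_, ?_, ?_⟩
      · intro K' hK'
        rcases Finset.mem_insert.mp hK' with h | h
        · subst h
          exact ⟨(Finset.mem_powersetCard.mp hKP).1, (Finset.mem_powersetCard.mp hKP).2⟩
        · exact h1 K' h
      · intro S hS
        by_cases hSK : S ⊆ K
        · exact ⟨K, Finset.mem_insert_self _ _, hSK⟩
        · obtain ⟨K', hK', hSK'⟩ := h2 S (Finset.mem_filter.mpr ⟨hS, hSK⟩)
          exact ⟨K', Finset.mem_insert_of_mem hK', hSK'⟩
      · -- cardinal bound
        set a : ℝ := (V.card.choose s : ℝ) / (k.choose s : ℝ) with ha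
        have hbR : (0:ℝ) < (k.choose s : ℝ) := by exact_mod_cast hb0
        have hMR : (0:ℝ) < (V.card.choose s : ℝ) := by exact_mod_cast hM0
        have ha0 : 0 < a := by positivity
        have hsum_split : ∑ j ∈ Finset.range n, min 1 (a / (j + 1))
            = ∑ j ∈ Finset.range (n - g), min 1 (a / (j + 1))
              + ∑ i ∈ Finset.range g, min 1 (a / ((n - g + i : ℕ) + 1)) := by
          have hre : n - g + g = n := Nat.sub_add_cancel hgn
          conv_lhs => rw [← hre]
          exact Finset.sum_range_add (fun j => min 1 (a / ((j:ℕ) + 1))) (n - g) g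
        have hterm : ∀ i ∈ Finset.range g,
            min 1 (a / (n : ℝ)) ≤ min 1 (a / ((n - g + i : ℕ) + 1)) := by
          intro i hi
          rw [Finset.mem_range] at hi
          apply min_le_min (le_refl 1)
          apply div_le_div_of_nonneg_left (le_of_lt ha0) _ _
          · positivity
          · push_cast
            have : (n - g + i : ℕ) + 1 ≤ n := by omega
            exact_mod_cast this
        have hone : (1:ℝ) ≤ ∑ i ∈ Finset.range g, min 1 (a / ((n - g + i : ℕ) + 1)) := by
          have hcard : (Finset.range g).card • min 1 (a / (n:ℝ))
              ≤ ∑ i ∈ Finset.range g, min 1 (a / ((n - g + i : ℕ) + 1)) :=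
            Finset.card_nsmul_le_sum _ _ _ hterm
          rw [Finset.card_range, nsmul_eq_mul] at hcard
          refine le_trans ?_ hcard
          have hnR : (0:ℝ) < (n:ℝ) := by exact_mod_cast hn
          rcases le_or_gt 1 (a / n) with hh | hh
          · rw [min_eq_left hh, mul_one]
            exact_mod_cast hg1
          · rw [min_eq_right (le_of_lt hh)]
            have hcast : (n:ℝ) * (k.choose s:ℝ) ≤ (g:ℝ) * (V.card.choose s:ℝ) := by
              exact_mod_cast hKgood
            have heq : (g:ℝ) * (a / n)
                = ((g:ℝ) * (V.card.choose s:ℝ)) / ((k.choose s:ℝ) * n) := by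
              rw [ha]; field_simp
            rw [heq, le_div_iff₀ (by positivity), one_mul]
            calc (k.choose s:ℝ) * n = (n:ℝ) * (k.choose s:ℝ) := mul_comm _ _
              _ ≤ _ := hcast
        calc ((insert K 𝒦').card : ℝ) ≤ (𝒦'.card : ℝ) + 1 := by
              exact_mod_cast Finset.card_insert_le K 𝒦'
          _ ≤ (∑ j ∈ Finset.range (n - g), min 1 (a / (j + 1))) + 1 := by linarith
          _ ≤ ∑ j ∈ Finset.range n, min 1 (a / (j + 1)) := by
              rw [hsum_split]; linarith

lemma sum_min_le (b M : ℕ) (hb : 1 ≤ b) (hbM : b ≤ M) :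
    ∑ j ∈ Finset.range M, min 1 ((M : ℝ) / b / (j + 1)) ≤
      (M : ℝ) / b * (1 + Real.log b) := by
  set a : ℝ := (M : ℝ) / b with ha_def
  have hb0 : (0 : ℝ) < b := by positivity
  have hM0 : (0 : ℝ) < M := by
    have : (1:ℕ) ≤ M := hb.trans hbM
    exact_mod_cast Nat.lt_of_lt_of_le Nat.zero_lt_one this
  have ha1 : (1 : ℝ) ≤ a := by
    rw [ha_def, le_div_iff₀ hb0, one_mul]
    exact_mod_cast hbM
  have ha0 : (0 : ℝ) < a := lt_of_lt_of_le one_pos ha1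
  set G : ℕ → ℝ := fun n => if (n : ℝ) ≤ a then (n : ℝ) else a + a * Real.log (n / a)
    with hG_def
  have hGhigh : ∀ n : ℕ, a ≤ (n : ℝ) → G n = a + a * Real.log (n / a) := by
    intro n hn
    by_cases h : (n : ℝ) ≤ a
    · have he : (n : ℝ) = a := le_antisymm h hn
      simp [hG_def, he, Real.log_one, div_self (ne_of_gt ha0)]
    · simp [hG_def, h]
  have key : ∀ j ∈ Finset.range M, min 1 (a / (j + 1)) ≤ G (j + 1) - G j := by
    intro j _
    set x : ℝ := ((j : ℕ) : ℝ) with hx_def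
    have hx0 : (0 : ℝ) ≤ x := Nat.cast_nonneg j
    have hcast : ((j + 1 : ℕ) : ℝ) = x + 1 := by push_cast; ring
    by_cases h1 : x + 1 ≤ a
    · have hGj1 : G (j + 1) = x + 1 := by simp [hG_def, hcast, h1]
      have hGj : G j = x := by
        have : x ≤ a := by linarith
        simp [hG_def, ← hx_def, this]
      rw [hGj1, hGj]
      simpa using min_le_left 1 (a / (x + 1))
    · push_neg at h1
      by_cases h2 : a ≤ x
      · -- both in log zone
        have hx1 : (1 : ℝ) ≤ x := ha1.trans h2
        have hGj : G j = a + a * Real.log (x / a) := hGhigh j h2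
        have hGj1 : G (j + 1) = a + a * Real.log ((x + 1) / a) := by
          have := hGhigh (j + 1) (by rw [hcast]; linarith)
          rwa [hcast] at this
        rw [hGj, hGj1]
        have hlog : Real.log ((x + 1) / a) - Real.log (x / a)
            = Real.log (x + 1) - Real.log x := by
          rw [Real.log_div (by linarith) (ne_of_gt ha0),
            Real.log_div (by linarith) (ne_of_gt ha0)]
          ring
        have hstep : (1 : ℝ) / (x + 1) ≤ Real.log (x + 1) - Real.log x := by
          have h := Real.log_le_sub_one_of_pos (x := x / (x + 1)) (by positivity)
          rw [Real.log_div (by linarith) (by linarith)] at h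
          have : x / (x + 1) - 1 = -(1 / (x + 1)) := by
            field_simp; ring
          rw [this] at h
          linarith
        have : a / (x + 1) ≤ a * (Real.log (x + 1) - Real.log x) := by
          rw [div_eq_mul_one_div]
          exact mul_le_mul_of_nonneg_left hstep (le_of_lt ha0)
        calc min 1 (a / (x + 1)) ≤ a / (x + 1) := min_le_right _ _
          _ ≤ a * (Real.log (x + 1) - Real.log x) := this
          _ = a + a * Real.log ((x + 1) / a) - (a + a * Real.log (x / a)) := by
              have : a + a * Real.log ((x + 1) / a) - (a + a * Real.log (x / a))
                  = a * (Real.log ((x + 1) / a) - Real.log (x / a)) := by ring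
              rw [this, hlog]
      · push_neg at h2
        -- x < a < x + 1
        have hGj : G j = x := by simp [hG_def, ← hx_def, le_of_lt h2]
        have hGj1 : G (j + 1) = a + a * Real.log ((x + 1) / a) := by
          have := hGhigh (j + 1) (by rw [hcast]; linarith)
          rwa [hcast] at this
        rw [hGj, hGj1]
        have hlb : 1 - a / (x + 1) ≤ Real.log ((x + 1) / a) := by
          have h := Real.log_le_sub_one_of_pos (x := a / (x + 1)) (by positivity)
          rw [Real.log_div (ne_of_gt ha0) (by linarith)] at h
          have h2' : Real.log ((x+1)/a) = Real.log (x+1) - Real.log a :=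
            Real.log_div (by linarith) (ne_of_gt ha0)
          rw [h2']; linarith
        have hmin : min 1 (a / (x + 1)) ≤ a / (x + 1) := min_le_right _ _
        have hx1pos : (0:ℝ) < x + 1 := by linarith
        have hkey : a / (x + 1) ≤ a + a * (1 - a / (x + 1)) - x := by
          rw [div_le_iff₀ hx1pos] at *
          have expand : (a + a * (1 - a / (x + 1)) - x) * (x + 1)
              = 2*a*(x+1) - a^2 - x*(x+1) := by
            field_simp; ring
          rw [expand]
          nlinarith [mul_nonneg (le_of_lt (sub_pos.mpr h2))
            (sub_nonneg.mpr (le_of_lt (show a < x + 1 from h1)))]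
        have : a + a * (1 - a / (x + 1)) - x ≤ a + a * Real.log ((x+1)/a) - x := by
          nlinarith [mul_le_mul_of_nonneg_left hlb (le_of_lt ha0)]
        linarith
  have htel : ∑ j ∈ Finset.range M, (G (j + 1) - G j) = G M - G 0 :=
    Finset.sum_range_sub G M
  have hG0 : G 0 = 0 := by simp [hG_def, le_of_lt ha0]
  have hGM : G M ≤ a * (1 + Real.log b) := by
    by_cases h : (M : ℝ) ≤ a
    · have hb1 : a ≤ (M:ℝ) := by
        rw [ha_def, div_le_iff₀ hb0]
        nlinarith [hM0, (show (1:ℝ) ≤ b by exact_mod_cast hb)]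
      have : G M = (M:ℝ) := by simp [hG_def, h]
      rw [this]
      have hlog : 0 ≤ Real.log b := Real.log_nonneg (by exact_mod_cast hb)
      nlinarith [le_antisymm h hb1]
    · push_neg at h
      have : G M = a + a * Real.log ((M:ℝ) / a) := hGhigh M (le_of_lt h)
      rw [this]
      have : (M:ℝ) / a = b := by
        rw [ha_def]; field_simp
      rw [this]; ring_nf; rfl
  calc ∑ j ∈ Finset.range M, min 1 ((M : ℝ) / b / (j + 1))
      ≤ ∑ j ∈ Finset.range M, (G (j + 1) - G j) := by
        apply Finset.sum_le_sum
        intro j hj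
        have := key j hj
        simpa [ha_def] using this
    _ = G M - G 0 := htel
    _ ≤ a * (1 + Real.log b) := by rw [hG0]; linarith

end

/-- Erdős–Spencer covering design bound: for positive integers `s ≤ k ≤ v` and a
`v`-element set `V`, there is a family `𝒦` of `k`-element subsets of `V` covering
every `s`-element subset of `V`, with `|𝒦| · C(k,s) ≤ (1 + ln C(k,s)) · C(v,s)`. -/
theorem covering_design_bound {α : Type*} [DecidableEq α]
    (v k s : ℕ) (hs : 1 ≤ s) (hsk : s ≤ k) (hkv : k ≤ v)
    (V : Finset α) (hV : V.card = v) :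
    ∃ 𝒦 : Finset (Finset α),
      (∀ K ∈ 𝒦, K ⊆ V ∧ K.card = k) ∧
      (∀ S ⊆ V, S.card = s → ∃ K ∈ 𝒦, S ⊆ K) ∧
      (𝒦.card : ℝ) * (k.choose s : ℝ) ≤
        (1 + Real.log (k.choose s : ℝ)) * (v.choose s : ℝ) := by
  obtain ⟨𝒦, h1, h2, h3⟩ := greedy_cover V k s hsk (by rw [hV]; exact hkv)
    (V.powersetCard s).card (V.powersetCard s) rfl
    (fun S hS => Finset.mem_powersetCard.mp hS)
  refine ⟨𝒦, h1, ?_, ?_⟩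
  · intro S hSV hScard
    exact h2 S (Finset.mem_powersetCard.mpr ⟨hSV, hScard⟩)
  · have hMcard : (V.powersetCard s).card = v.choose s := by
      rw [Finset.card_powersetCard, hV]
    have hbM : k.choose s ≤ v.choose s := Nat.choose_le_choose s hkv
    have hb1 : 1 ≤ k.choose s := Nat.choose_pos hsk
    have hD := sum_min_le (k.choose s) (v.choose s) hb1 hbM
    rw [hMcard] at h3
    have hVc : V.card.choose s = v.choose s := by rw [hV]
    rw [hVc] at h3
    have h4 : (𝒦.card : ℝ) ≤
        (v.choose s : ℝ) / (k.choose s : ℝ) * (1 + Real.log (k.choose s)) :=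
      le_trans h3 hD
    have hbR : (0:ℝ) < (k.choose s : ℝ) := by exact_mod_cast hb1
    calc (𝒦.card : ℝ) * (k.choose s : ℝ)
        ≤ ((v.choose s : ℝ) / (k.choose s : ℝ) * (1 + Real.log (k.choose s)))
            * (k.choose s : ℝ) :=
          mul_le_mul_of_nonneg_right h4 (le_of_lt hbR)
      _ = (1 + Real.log (k.choose s : ℝ)) * (v.choose s : ℝ) := by
          field_simp
end

section
/- For all real κ with 1/2 ≤ κ ≤ 1, one has 1 - κ + κ·H(1/(2κ)) ≥ κ. -/
/-- The binary entropy function `H(x) = -x·log₂ x - (1-x)·log₂ (1-x)`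
(with the convention `log₂ 0 = 0`, so `H 0 = H 1 = 0`). -/
noncomputable def binH (x : ℝ) : ℝ :=
  -x * Real.logb 2 x - (1 - x) * Real.logb 2 (1 - x)

lemma binH_eq (x : ℝ) : binH x = Real.binEntropy x / Real.log 2 := by
  unfold binH Real.binEntropy Real.logb
  rw [Real.log_inv, Real.log_inv]
  ring

lemma binEntropy_ge (t : ℝ) (h0 : 0 ≤ t) (h1 : t ≤ 1/2) :
    2 * t * Real.log 2 ≤ Real.binEntropy t := by
  have hc := Real.strictConcave_binEntropy.concaveOn
  have h := hc.2 (show (0:ℝ) ∈ Set.Icc (0:ℝ) 1 by constructor <;> norm_num)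
    (show ((2:ℝ)⁻¹) ∈ Set.Icc (0:ℝ) 1 by constructor <;> norm_num)
    (show (0:ℝ) ≤ 1 - 2*t by linarith) (show (0:ℝ) ≤ 2*t by linarith) (by ring)
  simp only [Real.binEntropy_zero, Real.binEntropy_two_inv, smul_eq_mul, mul_zero,
    zero_add] at h
  have : 2*t*2⁻¹ = t := by ring
  rw [this] at h
  linarith

/-- For `1/2 ≤ κ ≤ 1`, one has `1 - κ + κ·H(1/(2κ)) ≥ κ`. -/
theorem beta_ge_kappa (κ : ℝ) (h1 : 1 / 2 ≤ κ) (h2 : κ ≤ 1) :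
    κ ≤ 1 - κ + κ * binH (1 / (2 * κ)) := by
  have hκ : (0:ℝ) < κ := by linarith
  set x : ℝ := 1 / (2 * κ) with hx
  have hx1 : 1/2 ≤ x := by
    rw [hx, div_le_div_iff₀] <;> nlinarith
  have hx2 : x ≤ 1 := by
    rw [hx, div_le_one (by linarith)]; linarith
  have hkx : κ * x = 1/2 := by
    rw [hx]; field_simp
  have hlog2 : (0:ℝ) < Real.log 2 := Real.log_pos (by norm_num)
  have key : 2 * (1 - x) * Real.log 2 ≤ Real.binEntropy x := by
    rw [← Real.binEntropy_one_sub]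
    exact binEntropy_ge (1 - x) (by linarith) (by linarith)
  have hH : 2 * (1 - x) ≤ binH x := by
    rw [binH_eq, le_div_iff₀ hlog2]
    linarith
  nlinarith [mul_le_mul_of_nonneg_left hH hκ.le]
end

section
/- (Tian–He inclusion–exclusion recurrence.) Let V be a nonempty finite set and for each i ∈ V let w_i be a real-valued function on the subsets of V \ {i}. For W ⊆ V let a_W := ∑_D ∏_{i ∈ W} w_i(D_i), the sum ranging over all acyclic digraphs D on W specified by in-neighbor sets D_i ⊆ W \ {i}, with a_∅ = 1. Then a_V = ∑_{∅ ≠ S ⊆ V} (-1)^{|S|-1} · (∏_{i ∈ S} ∑_{D_i ⊆ V\S} w_i(D_i)) · a_{V\S}. -/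
open Classical in
/-- The acyclic digraphs on the node set `W`, each specified by its family of
in-neighbor sets `D i ⊆ W \ {i}` for `i ∈ W` (and `D i = ∅` for `i ∉ W`);
acyclicity means the edge relation `{(j,i) : i ∈ W, j ∈ D i}` has an
irreflexive transitive closure. -/
noncomputable def ADigraphs {α : Type*} [DecidableEq α] [Fintype α] (W : Finset α) :
    Finset (α → Finset α) :=
  Finset.univ.filter fun D =>
    (∀ i, D i ⊆ W.erase i) ∧ (∀ i ∉ W, D i = ∅) ∧
      ∀ x, ¬ Relation.TransGen (fun j i => i ∈ W ∧ j ∈ D i) x x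

section TianHeAux

open Finset

variable {α : Type*} [DecidableEq α] [Fintype α]

lemma mem_ADigraphs {W : Finset α} {D : α → Finset α} :
    D ∈ ADigraphs W ↔ (∀ i, D i ⊆ W.erase i) ∧ (∀ i ∉ W, D i = ∅) ∧
      ∀ x, ¬ Relation.TransGen (fun j i => i ∈ W ∧ j ∈ D i) x x := by
  classical
  simp [ADigraphs]

/-- every nonempty acyclic digraph has a vertex with no out-edges -/
lemma sink_exists {V : Finset α} (hV : V.Nonempty) {D : α → Finset α}
    (hD : D ∈ ADigraphs V) : (V \ V.biUnion D).Nonempty := by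
  rw [mem_ADigraphs] at hD
  obtain ⟨h1, h2, h3⟩ := hD
  set r : α → α → Prop := fun j i => i ∈ V ∧ j ∈ D i with hr
  haveI : IsIrrefl α (fun a b => Relation.TransGen r b a) := ⟨fun a h => h3 a h⟩
  haveI : IsTrans α (fun a b => Relation.TransGen r b a) :=
    ⟨fun a b c hab hbc => hbc.trans hab⟩
  have hwf := Finite.wellFounded_of_trans_of_irrefl (fun a b : α => Relation.TransGen r b a)
  obtain ⟨m, hmV, hmin⟩ := hwf.has_min (↑V : Set α) (Finset.coe_nonempty.2 hV)
  refine ⟨m, Finset.mem_sdiff.2 ⟨hmV, fun hm => ?_⟩⟩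
  obtain ⟨i, hiV, hmi⟩ := Finset.mem_biUnion.1 hm
  exact hmin i hiV (Relation.TransGen.single ⟨hiV, hmi⟩)

lemma alt_sum {T : Finset α} (hT : T.Nonempty) :
    ∑ S ∈ T.powerset.erase ∅, (-1 : ℝ) ^ (S.card - 1) = 1 := by
  have h0 := Finset.sum_powerset_neg_one_pow_card_of_nonempty hT
  have key : ∑ S ∈ T.powerset, (-1 : ℝ) ^ S.card = 0 := by exact_mod_cast h0
  rw [← Finset.add_sum_erase _ _ (Finset.empty_mem_powerset T)] at key
  simp only [Finset.card_empty, pow_zero] at key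
  have hc : ∀ S ∈ T.powerset.erase ∅, (-1 : ℝ) ^ (S.card - 1) = -(-1 : ℝ) ^ S.card := by
    intro S hS
    have hne : S ≠ ∅ := Finset.ne_of_mem_erase hS
    have hpos : 1 ≤ S.card := Finset.card_pos.2 (Finset.nonempty_iff_ne_empty.2 hne)
    have h1 : S.card - 1 + 1 = S.card := by omega
    have h2 := pow_succ (-1 : ℝ) (S.card - 1)
    rw [h1] at h2
    rw [h2]; ring
  rw [Finset.sum_congr rfl hc, Finset.sum_neg_distrib]
  linarith

/-- expanding a product of sums over powersets into a sum over function families -/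
lemma prod_sum_powerset (w : α → Finset α → ℝ) (t : Finset α) (S : Finset α) :
    (∏ i ∈ S, ∑ Di ∈ t.powerset, w i Di)
      = ∑ E ∈ Finset.univ.filter
          (fun E : α → Finset α => (∀ i ∈ S, E i ⊆ t) ∧ ∀ i ∉ S, E i = ∅),
          ∏ i ∈ S, w i (E i) := by
  classical
  induction S using Finset.induction_on with
  | empty =>
      have h : (Finset.univ.filter (fun E : α → Finset α => ∀ i, E i = ∅))
          = {fun _ => (∅ : Finset α)} := by
        ext E
        simp [funext_iff]
      simp [h]
  | @insert a S' ha ih =>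
      rw [Finset.prod_insert ha, ih, Finset.sum_mul_sum, ← Finset.sum_product']
      refine Finset.sum_nbij' (fun p => fun i => if i = a then p.1 else p.2 i)
        (fun E => (E a, fun i => if i = a then (∅ : Finset α) else E i))
        ?_ ?_ ?_ ?_ ?_
      · rintro ⟨Da, E⟩ hp
        rw [Finset.mem_product] at hp
        obtain ⟨hDa, hE⟩ := hp
        rw [Finset.mem_filter] at hE ⊢
        refine ⟨Finset.mem_univ _, ?_, ?_⟩
        · intro i hi
          rcases Finset.mem_insert.1 hi with h | h
          · subst h; simpa using Finset.mem_powerset.1 hDa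
          · have : i ≠ a := fun hia => ha (hia ▸ h)
            simpa [this] using hE.2.1 i h
        · intro i hi
          have h1 : i ≠ a := fun hia => hi (hia ▸ Finset.mem_insert_self a S')
          have h2 : i ∉ S' := fun h => hi (Finset.mem_insert_of_mem h)
          simpa [h1] using hE.2.2 i h2
      · intro E hE
        rw [Finset.mem_filter] at hE
        rw [Finset.mem_product, Finset.mem_filter]
        refine ⟨Finset.mem_powerset.2 (hE.2.1 a (Finset.mem_insert_self a S')),
          Finset.mem_univ _, ?_, ?_⟩
        · intro i hi
          have : i ≠ a := fun hia => ha (hia ▸ hi)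
          simpa [this] using hE.2.1 i (Finset.mem_insert_of_mem hi)
        · intro i hi
          by_cases hia : i = a
          · simp [hia]
          · have : i ∉ insert a S' := by simp [hia, hi]
            simpa [hia] using hE.2.2 i this
      · rintro ⟨Da, E⟩ hp
        rw [Finset.mem_product, Finset.mem_filter] at hp
        refine Prod.ext (by simp) ?_
        funext i
        by_cases hia : i = a
        · simp [hia, (hp.2.2.2 a ha).symm]
        · simp [hia]
      · intro E hE
        funext i
        by_cases hia : i = a
        · simp [hia]
        · simp [hia]
      · rintro ⟨Da, E⟩ hp
        rw [Finset.mem_product, Finset.mem_filter] at hp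
        rw [Finset.prod_insert ha]
        simp only [if_pos rfl]
        congr 1
        refine Finset.prod_congr rfl fun i hi => ?_
        have : i ≠ a := fun hia => ha (hia ▸ hi)
        simp [this]

/-- a single inclusion–exclusion term counts the acyclic digraphs on `V`
all of whose in-neighbor sets avoid `S` -/
lemma step1 (V S : Finset α) (hS : S ⊆ V) (w : α → Finset α → ℝ) :
    (∏ i ∈ S, ∑ Di ∈ (V \ S).powerset, w i Di) *
        (∑ D ∈ ADigraphs (V \ S), ∏ i ∈ V \ S, w i (D i))
      = ∑ D ∈ (ADigraphs V).filter (fun D => ∀ i, Disjoint (D i) S),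
          ∏ i ∈ V, w i (D i) := by
  classical
  rw [prod_sum_powerset w (V \ S) S, Finset.sum_mul_sum, ← Finset.sum_product']
  refine Finset.sum_nbij' (fun p => fun i => if i ∈ S then p.1 i else p.2 i)
    (fun D => (fun i => if i ∈ S then D i else (∅ : Finset α),
               fun i => if i ∈ S then (∅ : Finset α) else D i))
    ?_ ?_ ?_ ?_ ?_
  · rintro ⟨E, D'⟩ hp
    rw [Finset.mem_product, Finset.mem_filter] at hp
    obtain ⟨⟨_, hE1, hE2⟩, hD'⟩ := hp
    rw [mem_ADigraphs] at hD'
    obtain ⟨hD'1, hD'2, hD'3⟩ := hD'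
    show (fun i => if i ∈ S then E i else D' i) ∈
      (ADigraphs V).filter (fun D => ∀ i, Disjoint (D i) S)
    set D : α → Finset α := fun i => if i ∈ S then E i else D' i with hDdef
    have hDsub : ∀ i, D i ⊆ (V \ S) := by
      intro i j hj
      by_cases hi : i ∈ S
      · exact hE1 i hi (by simpa [hDdef, hi] using hj)
      · exact Finset.mem_of_mem_erase (hD'1 i (by simpa [hDdef, hi] using hj))
    rw [Finset.mem_filter, mem_ADigraphs]
    have hVsub : ∀ i, D i ⊆ V.erase i := by
      intro i j hj
      have hjVS := hDsub i hj
      rw [Finset.mem_sdiff] at hjVS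
      rw [Finset.mem_erase]
      refine ⟨?_, hjVS.1⟩
      by_cases hi : i ∈ S
      · exact fun hji => hjVS.2 (hji ▸ hi)
      · have := hD'1 i (by simpa [hDdef, hi] using hj)
        exact (Finset.mem_erase.1 this).1
    refine ⟨⟨hVsub, ?_, ?_⟩, ?_⟩
    · intro i hi
      have h1 : i ∉ S := fun h => hi (hS h)
      have h2 : i ∉ V \ S := fun h => hi (Finset.mem_sdiff.1 h).1
      simp only [hDdef, if_neg h1]
      exact hD'2 i h2
    · -- acyclicity
      set r : α → α → Prop := fun j i => i ∈ V ∧ j ∈ D i with hrdef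
      set r' : α → α → Prop := fun j i => i ∈ V \ S ∧ j ∈ D' i with hr'def
      have hsrc : ∀ j i, r j i → j ∈ V \ S := fun j i hji => hDsub i hji.2
      have hstep : ∀ j i, r j i → i ∉ S → r' j i := by
        rintro j i ⟨hiV, hjD⟩ hi
        exact ⟨Finset.mem_sdiff.2 ⟨hiV, hi⟩, by simpa [hDdef, hi] using hjD⟩
      have hmain : ∀ x y, Relation.TransGen r x y → y ∉ S → Relation.TransGen r' x y := by
        intro x y h
        induction h with
        | single h => exact fun hy => Relation.TransGen.single (hstep _ _ h hy)
        | @tail b c hxb hbc ih =>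
            intro hy
            have hb : b ∉ S := (Finset.mem_sdiff.1 (hsrc _ _ hbc)).2
            exact (ih hb).tail (hstep _ _ hbc hy)
      intro x hx
      have hxS : x ∉ S := by
        obtain ⟨c, hc, -⟩ := Relation.TransGen.head'_iff.1 hx
        exact (Finset.mem_sdiff.1 (hsrc _ _ hc)).2
      exact hD'3 x (hmain x x hx hxS)
    · intro i
      rw [Finset.disjoint_left]
      intro j hj
      exact (Finset.mem_sdiff.1 (hDsub i hj)).2
  · intro D hD
    rw [Finset.mem_filter, mem_ADigraphs] at hD
    obtain ⟨⟨hD1, hD2, hD3⟩, hdisj⟩ := hD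
    rw [Finset.mem_product, Finset.mem_filter]
    refine ⟨⟨Finset.mem_univ _, ?_, ?_⟩, ?_⟩
    · intro i hi j hj
      simp only [if_pos hi] at hj
      rw [Finset.mem_sdiff]
      exact ⟨(Finset.erase_subset i V) (hD1 i hj),
        fun hjS => (Finset.disjoint_left.1 (hdisj i)) hj hjS⟩
    · intro i hi; simp [hi]
    · rw [mem_ADigraphs]
      refine ⟨?_, ?_, ?_⟩
      · intro i j hj
        by_cases hi : i ∈ S
        · simp [hi] at hj
        · simp only [if_neg hi] at hj
          have h1 := Finset.mem_erase.1 (hD1 i hj)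
          rw [Finset.mem_erase, Finset.mem_sdiff]
          exact ⟨h1.1, h1.2, fun hjS => (Finset.disjoint_left.1 (hdisj i)) hj hjS⟩
      · intro i hi
        by_cases hiS : i ∈ S
        · simp [hiS]
        · have : i ∉ V := fun hiV => hi (Finset.mem_sdiff.2 ⟨hiV, hiS⟩)
          simp [hiS, hD2 i this]
      · intro x hx
        refine hD3 x (Relation.TransGen.mono ?_ x x hx)
        rintro j i ⟨hi, hj⟩
        have hiS : i ∉ S := (Finset.mem_sdiff.1 hi).2
        exact ⟨(Finset.mem_sdiff.1 hi).1, by simpa [hiS] using hj⟩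
  · rintro ⟨E, D'⟩ hp
    rw [Finset.mem_product, Finset.mem_filter] at hp
    obtain ⟨⟨_, hE1, hE2⟩, hD'⟩ := hp
    rw [mem_ADigraphs] at hD'
    refine Prod.ext ?_ ?_ <;> funext i <;> by_cases hi : i ∈ S
    · simp [hi]
    · simp [hi, (hE2 i hi).symm]
    · have : i ∉ V \ S := fun h => (Finset.mem_sdiff.1 h).2 hi
      simp [hi, (hD'.2.1 i this).symm]
    · simp [hi]
  · intro D hD
    funext i
    by_cases hi : i ∈ S <;> simp [hi]
  · rintro ⟨E, D'⟩ hp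
    rw [Finset.mem_product, Finset.mem_filter] at hp
    rw [← Finset.prod_sdiff hS, mul_comm]
    congr 1
    · refine Finset.prod_congr rfl fun i hi => ?_
      have h := (Finset.mem_sdiff.1 hi).2
      simp [h]
    · refine Finset.prod_congr rfl fun i hi => ?_
      simp [hi]

end TianHeAux

/-- Tian–He inclusion–exclusion recurrence: with
`a_W := ∑_D ∏_{i ∈ W} w_i(D_i)` the modular-weight sum over acyclic digraphs
on `W`, one has for nonempty `V`:
`a_V = ∑_{∅ ≠ S ⊆ V} (-1)^{|S|-1} (∏_{i ∈ S} ∑_{D_i ⊆ V∖S} w_i(D_i)) a_{V∖S}`. -/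
theorem tian_he_recurrence {α : Type*} [DecidableEq α] [Fintype α]
    (V : Finset α) (hV : V.Nonempty) (w : α → Finset α → ℝ) :
    (∑ D ∈ ADigraphs V, ∏ i ∈ V, w i (D i)) =
      ∑ S ∈ V.powerset.erase ∅,
        (-1 : ℝ) ^ (S.card - 1) *
          (∏ i ∈ S, ∑ Di ∈ (V \ S).powerset, w i Di) *
          (∑ D ∈ ADigraphs (V \ S), ∏ i ∈ V \ S, w i (D i)) := by
  classical
  have hterm : ∀ S ∈ V.powerset.erase ∅,
      (-1 : ℝ) ^ (S.card - 1) *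
          (∏ i ∈ S, ∑ Di ∈ (V \ S).powerset, w i Di) *
          (∑ D ∈ ADigraphs (V \ S), ∏ i ∈ V \ S, w i (D i))
        = ∑ D ∈ (ADigraphs V).filter (fun D => ∀ i, Disjoint (D i) S),
            (-1 : ℝ) ^ (S.card - 1) * ∏ i ∈ V, w i (D i) := by
    intro S hS
    have hSV : S ⊆ V := Finset.mem_powerset.1 (Finset.mem_of_mem_erase hS)
    rw [mul_assoc, step1 V S hSV w, Finset.mul_sum]
  rw [Finset.sum_congr rfl hterm]
  rw [Finset.sum_comm' (s := V.powerset.erase ∅)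
    (t := fun S => (ADigraphs V).filter (fun D => ∀ i, Disjoint (D i) S))
    (t' := ADigraphs V)
    (s' := fun D => (V \ V.biUnion D).powerset.erase ∅) ?_]
  · refine (Finset.sum_congr rfl fun D hD => ?_).symm
    have hsink := sink_exists hV hD
    rw [← Finset.sum_mul, alt_sum hsink, one_mul]
  · intro S D
    constructor
    · rintro ⟨hS, hD⟩
      rw [Finset.mem_filter] at hD
      have hSV : S ⊆ V := Finset.mem_powerset.1 (Finset.mem_of_mem_erase hS)
      refine ⟨Finset.mem_erase.2 ⟨(Finset.mem_erase.1 hS).1, Finset.mem_powerset.2 ?_⟩, hD.1⟩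
      intro j hj
      rw [Finset.mem_sdiff]
      refine ⟨hSV hj, fun hjb => ?_⟩
      obtain ⟨i, _, hji⟩ := Finset.mem_biUnion.1 hjb
      exact (Finset.disjoint_left.1 (hD.2 i)) hji hj
    · rintro ⟨hS, hD⟩
      have hsub : S ⊆ V \ V.biUnion D := Finset.mem_powerset.1 (Finset.mem_of_mem_erase hS)
      have hDV := hD; rw [mem_ADigraphs] at hDV
      refine ⟨Finset.mem_erase.2 ⟨(Finset.mem_erase.1 hS).1,
        Finset.mem_powerset.2 (hsub.trans Finset.sdiff_subset)⟩, ?_⟩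
      rw [Finset.mem_filter]
      refine ⟨hD, fun i => Finset.disjoint_left.2 fun j hjD hjS => ?_⟩
      have hjmem := hsub hjS
      rw [Finset.mem_sdiff] at hjmem
      refine hjmem.2 (Finset.mem_biUnion.2 ⟨i, ?_, hjD⟩)
      by_contra hiV
      rw [hDV.2.1 i hiV] at hjD
      exact absurd hjD (Finset.notMem_empty j)
end
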